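/- Consider a CNN with preactivations h_{i,μ}^{(ℓ)}(X)[n] = b_i^{(ℓ)} + Σ_{j=1}^{C_{ℓ-1}[n]} Σ_{ν∈⟦μ⟧} U_{i,j,ν}^{(ℓ)} z_{j,ν}^{(ℓ-1)}(X)[n], z = φ(h), where for every layer the kernel U^{(ℓ)} ∈ ℝ^{C_ℓ × C_{ℓ-1} × k × k} has a distribution invariant under permutations of its first index and under permutations of its second index, kernels and biases across layers are mutually independent, and biases have iid entries. Fix ℓ ≥ 2, a finite set L of triples (i, X, μ), coefficients α, and let E_{i,j,ν}^{(ℓ)} = σ_W^{-1} √(C_{ℓ-1}) U_{i,j,ν}^{(ℓ)}. Then the random variables γ_j^{(ℓ)}(α, L)[n] = σ_W Σ_{(i,X,μ)∈L} α_{(i,X,μ)} Σ_{ν∈⟦μ⟧} E_{i,j,ν}^{(ℓ)} z_{j,ν}^{(ℓ-1)}(X)[n], for j = 1, …, C_{ℓ-1}[n], are exchangeable in j. -/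

import Mathlib

open MeasureTheory ProbabilityTheory Finset

noncomputable section

variable {Ω : Type*} [MeasureSpace Ω]

/-- A random convolutional kernel field `U : ℕ → ℕ → (ℤ × ℤ) → Ω → ℝ` (output channel,
input channel, filter offset) with `m` relevant output channels is row-exchangeable if its
joint distribution is invariant under permutations of the output-channel index. -/
def KernelRowExchangeable (U : ℕ → ℕ → (ℤ × ℤ) → Ω → ℝ) (m : ℕ) : Prop :=
  ∀ σ : Equiv.Perm ℕ, (∀ i, m ≤ i → σ i = i) →
    IdentDistrib (fun ω => fun (i j : ℕ) (δ : ℤ × ℤ) => U (σ i) j δ ω)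
      (fun ω => fun (i j : ℕ) (δ : ℤ × ℤ) => U i j δ ω) volume volume

/-- Column-exchangeability of a random convolutional kernel field: invariance of the joint
distribution under permutations of the input-channel index. -/
def KernelColExchangeable (U : ℕ → ℕ → (ℤ × ℤ) → Ω → ℝ) (nc : ℕ) : Prop :=
  ∀ σ : Equiv.Perm ℕ, (∀ j, nc ≤ j → σ j = j) →
    IdentDistrib (fun ω => fun (i j : ℕ) (δ : ℤ × ℤ) => U i (σ j) δ ω)
      (fun ω => fun (i j : ℕ) (δ : ℤ × ℤ) => U i j δ ω) volume volume

/-- Index type for the joint family of per-layer convolutional kernels (`Sum.inl ℓ`) and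
per-layer bias vectors (`Sum.inr ℓ`). -/
def cnnFieldType : ℕ ⊕ ℕ → Type :=
  Sum.elim (fun _ => ℕ → ℕ → (ℤ × ℤ) → ℝ) (fun _ => ℕ → ℝ)

instance cnnFieldTypeMeasurableSpace : ∀ k, MeasurableSpace (cnnFieldType k)
  | Sum.inl _ => inferInstanceAs (MeasurableSpace (ℕ → ℕ → (ℤ × ℤ) → ℝ))
  | Sum.inr _ => inferInstanceAs (MeasurableSpace (ℕ → ℝ))

/-- The joint family of per-layer convolutional kernels and per-layer bias vectors. -/
def cnnFields (U : ℕ → ℕ → ℕ → (ℤ × ℤ) → Ω → ℝ) (b : ℕ → ℕ → Ω → ℝ) :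
    (k : ℕ ⊕ ℕ) → Ω → cnnFieldType k
  | Sum.inl ℓ => fun ω i j δ => U ℓ i j δ ω
  | Sum.inr ℓ => fun ω i => b ℓ i ω

/-!
Every preactivation is a deterministic function of the weights `w = (U^{(l)}, b^{(l)})_l`.
Relabelling by `σ` the channels of layer `ℓ - 1` (the output channels of `U^{(ℓ-1)}` and
`b^{(ℓ-1)}`, and the input channels of `U^{(ℓ)}`) does not change the law of `w`: the layers are
independent and each affected component is exchangeable in the permuted index (the bias because
its entries are iid). The relabelled network computes `z^{(ℓ-1)}_{σ j}` in channel `j` and reads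
column `σ j` of `U^{(ℓ)}`, so the relabelling turns `γ_j` into `γ_{σ j}`.
-/

theorem ProbabilityTheory.iIndepFun.identDistrib_comp_perm {Ω' ι E : Type*} [MeasurableSpace Ω']
    [Countable ι] [MeasurableSpace E] {μ : Measure Ω'} {f : ι → Ω' → E} (hind : iIndepFun f μ)
    (hid : ∀ i j, IdentDistrib (f i) (f j) μ μ) (σ : Equiv.Perm ι) :
    IdentDistrib (fun ω i => f (σ i) ω) (fun ω i => f i ω) μ μ :=
  IdentDistrib.pi (fun i => hid (σ i) i) (hind.precomp σ.injective) hind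

abbrev CnnWeights : Type := ∀ k : ℕ ⊕ ℕ, cnnFieldType k

section Deterministic

variable {𝒳 : Type*} (emb : 𝒳 → ℕ → ℤ × ℤ → ℝ) (φ : ℝ → ℝ) (Cn : ℕ → ℕ) (D : Finset (ℤ × ℤ))

/-- The activation `z_{j,μ}^{(ℓ)}(X)` computed from the weights `w`, with `z^{(0)} = emb`. -/
def cnnActivation : ℕ → ℕ → 𝒳 → ℤ × ℤ → CnnWeights → ℝ
  | 0, j, X, μ, _ => emb X j μ
  | ℓ + 1, j, X, μ, w => φ (w (.inr (ℓ + 1)) j +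
      ∑ j' ∈ range (Cn ℓ), ∑ δ ∈ D, w (.inl (ℓ + 1)) j j' δ * cnnActivation ℓ j' X (μ + δ) w)

variable {φ} in
theorem measurable_cnnActivation (hφ : Measurable φ) (ℓ j : ℕ) (X : 𝒳) (μ : ℤ × ℤ) :
    Measurable (cnnActivation emb φ Cn D ℓ j X μ) := by
  induction ℓ generalizing j μ with
  | zero => exact measurable_const
  | succ ℓ ih =>
    simp only [cnnActivation]
    fun_prop

def relabelChannels (m : ℕ) (σ : Equiv.Perm ℕ) : ∀ k, cnnFieldType k → cnnFieldType k
  | .inl l => fun x i j δ => x (if l = m then σ i else i) (if l = m + 1 then σ j else j) δ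
  | .inr l => fun x i => x (if l = m then σ i else i)

theorem measurable_relabelChannels (m : ℕ) (σ : Equiv.Perm ℕ) (k : ℕ ⊕ ℕ) :
    Measurable (relabelChannels m σ k) := by
  cases k <;> simp only [relabelChannels] <;> fun_prop

theorem cnnActivation_relabelChannels_of_lt {m ℓ : ℕ} (hℓ : ℓ < m) (σ : Equiv.Perm ℕ)
    (w : CnnWeights) (j : ℕ) (X : 𝒳) (μ : ℤ × ℤ) :
    cnnActivation emb φ Cn D ℓ j X μ (fun k => relabelChannels m σ k (w k)) =
      cnnActivation emb φ Cn D ℓ j X μ w := by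
  induction ℓ generalizing j μ with
  | zero => rfl
  | succ ℓ ih =>
    simp only [cnnActivation, ih (by omega)]
    simp only [relabelChannels, if_neg hℓ.ne, if_neg (by omega : ℓ + 1 ≠ m + 1)]

theorem cnnActivation_relabelChannels_self {m : ℕ} (hm : 1 ≤ m) (σ : Equiv.Perm ℕ)
    (w : CnnWeights) (j : ℕ) (X : 𝒳) (μ : ℤ × ℤ) :
    cnnActivation emb φ Cn D m j X μ (fun k => relabelChannels m σ k (w k)) =
      cnnActivation emb φ Cn D m (σ j) X μ w := by
  obtain ⟨ℓ, rfl⟩ : ∃ ℓ, m = ℓ + 1 := ⟨m - 1, by omega⟩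
  simp only [cnnActivation, cnnActivation_relabelChannels_of_lt emb φ Cn D (Nat.lt_succ_self ℓ)]
  simp [relabelChannels]

theorem apply_eq_cnnActivation_of_recursion (w : CnnWeights) (g : ℕ → ℕ → 𝒳 → ℤ × ℤ → ℝ)
    (hg1 : ∀ i X μ, g 1 i X μ =
      w (.inr 1) i + ∑ j ∈ range (Cn 0), ∑ δ ∈ D, w (.inl 1) i j δ * emb X j (μ + δ))
    (hg : ∀ ℓ, 1 ≤ ℓ → ∀ i X μ, g (ℓ + 1) i X μ =
      w (.inr (ℓ + 1)) i + ∑ j ∈ range (Cn ℓ), ∑ δ ∈ D, w (.inl (ℓ + 1)) i j δ * φ (g ℓ j X (μ + δ)))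
    {ℓ : ℕ} (hℓ : 1 ≤ ℓ) (j : ℕ) (X : 𝒳) (μ : ℤ × ℤ) :
    φ (g ℓ j X μ) = cnnActivation emb φ Cn D ℓ j X μ w := by
  induction ℓ, hℓ using Nat.le_induction generalizing j μ with
  | base => rw [hg1]; rfl
  | succ ℓ hℓ ih => simp only [hg ℓ hℓ, cnnActivation, ← ih]

end Deterministic

section Random

variable {U : ℕ → ℕ → ℕ → ℤ × ℤ → Ω → ℝ} {b : ℕ → ℕ → Ω → ℝ}

theorem measurable_cnnFields (hU : ∀ l i j δ, Measurable (U l i j δ))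
    (hb : ∀ l i, Measurable (b l i)) (k : ℕ ⊕ ℕ) : Measurable (cnnFields U b k) := by
  rcases k with l | l <;> simp only [cnnFields] <;> fun_prop

theorem identDistrib_relabelChannels [IsProbabilityMeasure (volume : Measure Ω)]
    (hU : ∀ l i j δ, Measurable (U l i j δ)) (hb : ∀ l i, Measurable (b l i))
    (hindep : iIndepFun (cnnFields U b) volume) {m c : ℕ}
    (hrow : KernelRowExchangeable (U m) c) (hcol : KernelColExchangeable (U (m + 1)) c)
    (hbiid : iIndepFun (b m) volume) (hbid : ∀ i i', IdentDistrib (b m i) (b m i') volume volume)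
    {σ : Equiv.Perm ℕ} (hσ : ∀ j, c ≤ j → σ j = j) :
    IdentDistrib (fun ω k => relabelChannels m σ k (cnnFields U b k ω))
      (fun ω k => cnnFields U b k ω) volume volume := by
  refine IdentDistrib.pi (fun k => ?_) (hindep.comp _ (measurable_relabelChannels m σ)) hindep
  have hrefl := IdentDistrib.refl (measurable_cnnFields hU hb k).aemeasurable (μ := volume)
  rcases k with l | l
  · by_cases hl : l = m
    · subst hl
      have e : (fun ω => relabelChannels l σ (.inl l) (cnnFields U b (.inl l) ω)) =
          fun ω i j δ => U l (σ i) j δ ω := by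
        funext ω i j δ; simp [relabelChannels, cnnFields]
      rw [e]; exact hrow σ hσ
    by_cases hl' : l = m + 1
    · subst hl'
      have e : (fun ω => relabelChannels m σ (.inl (m + 1)) (cnnFields U b (.inl (m + 1)) ω)) =
          fun ω i j δ => U (m + 1) i (σ j) δ ω := by
        funext ω i j δ; simp [relabelChannels, cnnFields]
      rw [e]; exact hcol σ hσ
    · have e : (fun ω => relabelChannels m σ (.inl l) (cnnFields U b (.inl l) ω)) =
          cnnFields U b (.inl l) := by
        funext ω; simp [relabelChannels, hl, hl']; rfl
      rw [e]; exact hrefl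
  · by_cases hl : l = m
    · subst hl
      have e : (fun ω => relabelChannels l σ (.inr l) (cnnFields U b (.inr l) ω)) =
          fun ω i => b l (σ i) ω := by
        funext ω i; simp [relabelChannels, cnnFields]
      rw [e]; exact hbiid.identDistrib_comp_perm hbid σ
    · have e : (fun ω => relabelChannels m σ (.inr l) (cnnFields U b (.inr l) ω)) =
          cnnFields U b (.inr l) := by
        funext ω; simp [relabelChannels, hl]; rfl
      rw [e]; exact hrefl

end Random

/-- Exchangeability (in the input-channel index `j`) of the summands `γ_j^{(ℓ)}(α, L)[n]`
of the exchangeable-CLT argument for CNNs whose kernels are invariant under permutations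
of the first and second (channel) indices, with mutually independent layers and iid bias
entries. -/
theorem cnn_gamma_summands_exchangeable
    [IsProbabilityMeasure (volume : Measure Ω)]
    {𝒳 : Type*} (emb : 𝒳 → ℕ → (ℤ × ℤ) → ℝ) (φ : ℝ → ℝ) (hφ : Measurable φ)
    (σW : ℝ) (C : ℕ → ℕ → ℕ) (D : Finset (ℤ × ℤ))
    (U : ℕ → ℕ → ℕ → ℕ → (ℤ × ℤ) → Ω → ℝ) (b : ℕ → ℕ → Ω → ℝ)
    (hUmeas : ∀ n ℓ i j δ, Measurable (U n ℓ i j δ))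
    (hbmeas : ∀ ℓ i, Measurable (b ℓ i))
    -- every kernel is invariant under permutations of its first and second indices
    (hexch : ∀ n ℓ', 1 ≤ ℓ' →
      KernelRowExchangeable (U n ℓ') (C ℓ' n) ∧ KernelColExchangeable (U n ℓ') (C (ℓ' - 1) n))
    -- kernels and biases across layers are mutually independent
    (hindep : ∀ n, iIndepFun (m := cnnFieldTypeMeasurableSpace) (cnnFields (U n) b) volume)
    -- the biases have iid entries
    (hbiid : ∀ ℓ, iIndepFun (m := fun _ => inferInstance) (fun i => b ℓ i) volume)
    (hbid : ∀ ℓ i i', IdentDistrib (b ℓ i) (b ℓ i') volume volume)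
    -- the preactivations h satisfy the CNN recursion
    (h : ℕ → ℕ → ℕ → 𝒳 → (ℤ × ℤ) → Ω → ℝ)
    (hrec1 : ∀ n i X μ ω,
      h n 1 i X μ ω =
        b 1 i ω + ∑ j ∈ Finset.range (C 0 n), ∑ δ ∈ D, U n 1 i j δ ω * emb X j (μ + δ))
    (hrec : ∀ n ℓ', 1 ≤ ℓ' → ∀ i X μ ω,
      h n (ℓ' + 1) i X μ ω =
        b (ℓ' + 1) i ω + ∑ j ∈ Finset.range (C ℓ' n), ∑ δ ∈ D,
          U n (ℓ' + 1) i j δ ω * φ (h n ℓ' j X (μ + δ) ω))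
    -- a fixed layer ℓ ≥ 2, finite index set L = {(idx p, inpX p, pix p)} and coefficients α
    (ℓ : ℕ) (hℓ : 2 ≤ ℓ)
    (P : ℕ) (idx : Fin P → ℕ) (inpX : Fin P → 𝒳) (pix : Fin P → ℤ × ℤ) (α : Fin P → ℝ) :
    -- the summands γ_j are exchangeable over j ∈ {1, …, C_{ℓ-1}[n]}
    ∀ n, ∀ σ : Equiv.Perm ℕ, (∀ j, C (ℓ - 1) n ≤ j → σ j = j) →
      IdentDistrib
        (fun ω => fun j : ℕ =>
          σW * ∑ p, α p * ∑ δ ∈ D,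
            (σW⁻¹ * Real.sqrt (C (ℓ - 1) n) * U n ℓ (idx p) (σ j) δ ω) *
              φ (h n (ℓ - 1) (σ j) (inpX p) (pix p + δ) ω))
        (fun ω => fun j : ℕ =>
          σW * ∑ p, α p * ∑ δ ∈ D,
            (σW⁻¹ * Real.sqrt (C (ℓ - 1) n) * U n ℓ (idx p) j δ ω) *
              φ (h n (ℓ - 1) j (inpX p) (pix p + δ) ω))
        volume volume := by
  intro n σ hσ
  obtain ⟨m, rfl⟩ : ∃ m, ℓ = m + 1 := ⟨ℓ - 1, by omega⟩
  simp only [Nat.add_sub_cancel] at hσ ⊢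
  have hm : 1 ≤ m := by omega
  have hact : ∀ j X μ ω, φ (h n m j X μ ω) =
      cnnActivation emb φ (C · n) D m j X μ (fun k => cnnFields (U n) b k ω) :=
    fun j X μ ω => apply_eq_cnnActivation_of_recursion emb φ (C · n) D
      (fun k => cnnFields (U n) b k ω) (fun ℓ' i X μ => h n ℓ' i X μ ω)
      (fun i X μ => hrec1 n i X μ ω) (fun ℓ' hℓ' i X μ => hrec n ℓ' hℓ' i X μ ω) hm j X μ
  let γ : CnnWeights → ℕ → ℝ := fun w j => σW * ∑ p, α p * ∑ δ ∈ D,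
    (σW⁻¹ * Real.sqrt (C m n) * w (.inl (m + 1)) (idx p) j δ) *
      cnnActivation emb φ (C · n) D m j (inpX p) (pix p + δ) w
  have hγ_meas : Measurable γ := by
    have := measurable_cnnActivation emb (C · n) D hφ m
    fun_prop
  have hγ_relabel : ∀ w j, γ (fun k => relabelChannels m σ k (w k)) j = γ w (σ j) := by
    intro w j
    simp only [γ, cnnActivation_relabelChannels_self emb φ (C · n) D hm]
    simp [relabelChannels]
  have hlaw := identDistrib_relabelChannels (hUmeas n) hbmeas (hindep n)
    (hexch n m hm).1 (hexch n (m + 1) (by omega)).2 (hbiid m) (hbid m) hσ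
  convert hlaw.comp hγ_meas using 1 <;> funext ω j
  · rw [Function.comp_apply, hγ_relabel (fun k => cnnFields (U n) b k ω)]
    simp only [γ, hact]
    rfl
  · simp only [Function.comp_apply, γ, hact]
    rfl
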